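/- For n ≥ 1, p+q = n, and b ∈ ℂ nonzero, define α : su(p+1,q) → su(p+1,q+1) by sending the block matrix (a, −X̄ᵀI ; X, A) (with a ∈ iℝ the negative trace of A ∈ u(p,q), X ∈ ℂⁿ, I the signature matrix diag(1_p, −1_q)) to the (1,n,1)-block matrix ((1/2)a, −(1/(2b))X̄ᵀI, (1/(4b b̄))a ; bX, A, (1/(2b̄))X ; b b̄ a, −b̄ X̄ᵀ I, (1/2)a). Then α is an injective Lie algebra homomorphism from su(p+1,q) into su(p+1,q+1). -/

import Mathlib

/-!
On `su(p+1,q)` the map `α` is a two-sided product `α(M) = V M W` with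
`V = (1/(2b), 0 ; 0, 1ₙ ; b̄, 0)` and `W = (b, 0, 1/(2b̄) ; 0, 1ₙ, 0)`: the entries of `α(M)`
built from `X̄ᵀI` come from the first row of `M`, which equals `−X̄ᵀI` on `su(p+1,q)`.
Since `W V = 1`, the map `M ↦ V M W` is injective and preserves traces and commutators, and the
identities `W J' = J Vᴴ`, `J' Wᴴ = V J` between the two forms give
`α(M) J' + J' α(M)ᴴ = V (M J + J Mᴴ) Vᴴ`, so `α` maps `su(p+1,q)` into `su(p+1,q+1)`.
-/

open Complex Matrix

/-- Signature vector of `su(p,q)` type forms: `+1` on the first `p`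
coordinates, `−1` on the remaining ones. -/
def suSig (p n : ℕ) : Fin n → ℂ := fun i => if (i : ℕ) < p then 1 else -1

/-- The hermitian form matrix of `su(p+1,q)` in `(1,n)`-block form:
`diag(1, I)` with `I = diag(1_p, −1_q)`. -/
noncomputable def suFormSmall (p n : ℕ) : Matrix (Unit ⊕ Fin n) (Unit ⊕ Fin n) ℂ :=
  Matrix.diagonal (fun r => match r with
    | .inl _ => 1
    | .inr i => suSig p n i)

/-- The hermitian form matrix of `su(p+1,q+1)` in `(1,n,1)`-block form:
`(x₀,x_i,x_{n+1})·(y₀,y_i,y_{n+1}) = x₀ȳ_{n+1} + x_{n+1}ȳ₀ + Σ_{i≤p} x_iȳ_i −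
Σ_{i>p} x_iȳ_i`. -/
noncomputable def suFormBig (p n : ℕ) :
    Matrix (Unit ⊕ (Fin n ⊕ Unit)) (Unit ⊕ (Fin n ⊕ Unit)) ℂ :=
  fun r c =>
    match r, c with
    | .inl _, .inr (.inr _) => 1
    | .inr (.inr _), .inl _ => 1
    | .inr (.inl i), .inr (.inl j) => if i = j then suSig p n i else 0
    | _, _ => 0

/-- The extension map `α` of the CR example: for
`M = (a, −X̄ᵀI ; X, A) ∈ su(p+1,q)` (in `(1,n)`-block form) the image is the
`(1,n,1)`-block matrix
`((1/2)a, −(1/(2b))X̄ᵀI, (1/(4bb̄))a ; bX, A, (1/(2b̄))X ; bb̄a, −b̄X̄ᵀI, (1/2)a)`. -/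
noncomputable def crAlpha (p n : ℕ) (b : ℂ)
    (M : Matrix (Unit ⊕ Fin n) (Unit ⊕ Fin n) ℂ) :
    Matrix (Unit ⊕ (Fin n ⊕ Unit)) (Unit ⊕ (Fin n ⊕ Unit)) ℂ :=
  fun r c =>
    match r, c with
    | .inl _, .inl _ => (1 / 2) * M (.inl ()) (.inl ())
    | .inl _, .inr (.inl j) =>
        -(1 / (2 * b)) * (starRingEnd ℂ) (M (.inr j) (.inl ())) * suSig p n j
    | .inl _, .inr (.inr _) => (1 / (4 * b * (starRingEnd ℂ) b)) * M (.inl ()) (.inl ())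
    | .inr (.inl i), .inl _ => b * M (.inr i) (.inl ())
    | .inr (.inl i), .inr (.inl j) => M (.inr i) (.inr j)
    | .inr (.inl i), .inr (.inr _) => (1 / (2 * (starRingEnd ℂ) b)) * M (.inr i) (.inl ())
    | .inr (.inr _), .inl _ => b * (starRingEnd ℂ) b * M (.inl ()) (.inl ())
    | .inr (.inr _), .inr (.inl j) =>
        -(starRingEnd ℂ) b * (starRingEnd ℂ) (M (.inr j) (.inl ())) * suSig p n j
    | .inr (.inr _), .inr (.inr _) => (1 / 2) * M (.inl ()) (.inl ())

namespace Matrix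

variable {m l R : Type*} [Fintype m] [Fintype l]

section LeftInverse

variable [DecidableEq m]

section Ring

variable [Ring R] {V : Matrix l m R} {W : Matrix m l R}

theorem mul_mul_injective_of_mul_eq_one (hWV : W * V = 1) :
    Function.Injective fun M : Matrix m m R => V * M * W :=
  Function.LeftInverse.injective (g := fun X => W * X * V) fun M => by
    dsimp only
    rw [← Matrix.mul_assoc, ← Matrix.mul_assoc, hWV, Matrix.one_mul, Matrix.mul_assoc, hWV,
      Matrix.mul_one]

theorem mul_commutator_mul_of_mul_eq_one (hWV : W * V = 1) (M N : Matrix m m R) :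
    V * (M * N - N * M) * W = V * M * W * (V * N * W) - V * N * W * (V * M * W) := by
  simp only [Matrix.mul_sub, Matrix.sub_mul, Matrix.mul_assoc, ← Matrix.mul_assoc W V, hWV,
    Matrix.one_mul]

end Ring

theorem trace_mul_mul_of_mul_eq_one [CommRing R] {V : Matrix l m R} {W : Matrix m l R}
    (hWV : W * V = 1) (M : Matrix m m R) : trace (V * M * W) = trace M := by
  rw [trace_mul_comm, ← Matrix.mul_assoc, hWV, Matrix.one_mul]

end LeftInverse

variable [Ring R] [StarRing R]

theorem commutator_mul_add_mul_conjTranspose {J M N : Matrix m m R}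
    (hM : M * J + J * Mᴴ = 0) (hN : N * J + J * Nᴴ = 0) :
    (M * N - N * M) * J + J * (M * N - N * M)ᴴ = 0 := by
  have hM' : J * Mᴴ = -(M * J) := eq_neg_of_add_eq_zero_right hM
  have hN' : J * Nᴴ = -(N * J) := eq_neg_of_add_eq_zero_right hN
  rw [conjTranspose_sub, conjTranspose_mul, conjTranspose_mul]
  simp only [Matrix.sub_mul, Matrix.mul_sub, ← Matrix.mul_assoc, hM', hN', Matrix.neg_mul]
  simp only [Matrix.mul_assoc, hM', hN', Matrix.mul_neg]
  abel

theorem mul_mul_mul_add_mul_conjTranspose {J : Matrix m m R} {J' : Matrix l l R}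
    {V : Matrix l m R} {W : Matrix m l R} (hW : W * J' = J * Vᴴ) (hV : J' * Wᴴ = V * J)
    (M : Matrix m m R) :
    V * M * W * J' + J' * (V * M * W)ᴴ = V * (M * J + J * Mᴴ) * Vᴴ := by
  rw [conjTranspose_mul, conjTranspose_mul, Matrix.mul_assoc (V * M), hW, ← Matrix.mul_assoc J',
    hV]
  simp only [Matrix.mul_add, Matrix.add_mul, Matrix.mul_assoc]

end Matrix

noncomputable def crV (n : ℕ) (b : ℂ) : Matrix (Unit ⊕ (Fin n ⊕ Unit)) (Unit ⊕ Fin n) ℂ :=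
  fun r c => match r, c with
  | .inl _, .inl _ => 1 / (2 * b)
  | .inr (.inl i), .inr j => if i = j then 1 else 0
  | .inr (.inr _), .inl _ => starRingEnd ℂ b
  | _, _ => 0

noncomputable def crW (n : ℕ) (b : ℂ) : Matrix (Unit ⊕ Fin n) (Unit ⊕ (Fin n ⊕ Unit)) ℂ :=
  fun r c => match r, c with
  | .inl _, .inl _ => b
  | .inl _, .inr (.inr _) => 1 / (2 * starRingEnd ℂ b)
  | .inr i, .inr (.inl j) => if i = j then 1 else 0
  | _, _ => 0

theorem crW_mul_crV (n : ℕ) {b : ℂ} (hb : b ≠ 0) : crW n b * crV n b = 1 := by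
  have hb' : starRingEnd ℂ b ≠ 0 := (map_ne_zero _).2 hb
  ext (_ | i) (_ | j) <;>
    simp [crW, crV, Matrix.mul_apply, Fintype.sum_sum_type, Matrix.one_apply]
  field_simp
  ring

theorem crW_mul_suFormBig (p n : ℕ) (b : ℂ) :
    crW n b * suFormBig p n = suFormSmall p n * (crV n b)ᴴ := by
  ext (_ | i) (_ | j | _) <;>
    simp [crW, crV, suFormBig, suFormSmall, Matrix.mul_apply, Fintype.sum_sum_type,
      Matrix.diagonal, conjTranspose_apply, mul_comm, Complex.conj_ofNat]
  split_ifs <;> simp_all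

theorem suFormBig_mul_crW_conjTranspose (p n : ℕ) (b : ℂ) :
    suFormBig p n * (crW n b)ᴴ = crV n b * suFormSmall p n := by
  ext (_ | i | _) (_ | j) <;>
    simp [crW, crV, suFormBig, suFormSmall, Matrix.mul_apply, Fintype.sum_sum_type,
      Matrix.diagonal, conjTranspose_apply, mul_comm, Complex.conj_ofNat]
  split_ifs <;> simp_all

theorem suSig_mul_self (p n : ℕ) (j : Fin n) : suSig p n j * suSig p n j = 1 := by
  unfold suSig; split_ifs <;> norm_num

theorem apply_inl_inr_eq_of_mul_suFormSmall_add {p n : ℕ}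
    {M : Matrix (Unit ⊕ Fin n) (Unit ⊕ Fin n) ℂ}
    (hM : M * suFormSmall p n + suFormSmall p n * Mᴴ = 0) (j : Fin n) :
    M (.inl ()) (.inr j) = -(starRingEnd ℂ (M (.inr j) (.inl ())) * suSig p n j) := by
  have h := congr_fun₂ hM (.inl ()) (.inr j)
  simp [Matrix.mul_apply, suFormSmall, Matrix.diagonal, conjTranspose_apply] at h
  linear_combination suSig p n j * h - M (.inl ()) (.inr j) * suSig_mul_self p n j

theorem crAlpha_add (p n : ℕ) (b : ℂ) (M N : Matrix (Unit ⊕ Fin n) (Unit ⊕ Fin n) ℂ) :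
    crAlpha p n b (M + N) = crAlpha p n b M + crAlpha p n b N := by
  ext (_ | i | _) (_ | j | _) <;> simp [crAlpha] <;> ring

theorem crAlpha_real_smul (p n : ℕ) (b : ℂ) (c : ℝ)
    (M : Matrix (Unit ⊕ Fin n) (Unit ⊕ Fin n) ℂ) :
    crAlpha p n b (c • M) = c • crAlpha p n b M := by
  ext (_ | i | _) (_ | j | _) <;> simp [crAlpha, Complex.real_smul] <;> ring

theorem crAlpha_eq_crV_mul_mul_crW {p n : ℕ} {b : ℂ} (hb : b ≠ 0)
    {M : Matrix (Unit ⊕ Fin n) (Unit ⊕ Fin n) ℂ}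
    (hM : M * suFormSmall p n + suFormSmall p n * Mᴴ = 0) :
    crAlpha p n b M = crV n b * M * crW n b := by
  have hb' : starRingEnd ℂ b ≠ 0 := (map_ne_zero _).2 hb
  have hrow := apply_inl_inr_eq_of_mul_suFormSmall_add hM
  ext (_ | i | _) (_ | j | _) <;>
    simp [crAlpha, crV, crW, Matrix.mul_apply, Fintype.sum_sum_type, hrow] <;>
    field_simp
  ring

theorem crAlpha_injective_lieHom_general (p n : ℕ) (b : ℂ) (hb : b ≠ 0) :
    (∀ M N : Matrix (Unit ⊕ Fin n) (Unit ⊕ Fin n) ℂ,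
        crAlpha p n b (M + N) = crAlpha p n b M + crAlpha p n b N) ∧
    (∀ (c : ℝ) (M : Matrix (Unit ⊕ Fin n) (Unit ⊕ Fin n) ℂ),
        crAlpha p n b (c • M) = c • crAlpha p n b M) ∧
    (∀ M : Matrix (Unit ⊕ Fin n) (Unit ⊕ Fin n) ℂ,
        M * suFormSmall p n + suFormSmall p n * Mᴴ = 0 → M.trace = 0 →
          crAlpha p n b M * suFormBig p n + suFormBig p n * (crAlpha p n b M)ᴴ = 0 ∧
          (crAlpha p n b M).trace = 0) ∧
    (∀ M N : Matrix (Unit ⊕ Fin n) (Unit ⊕ Fin n) ℂ,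
        M * suFormSmall p n + suFormSmall p n * Mᴴ = 0 → M.trace = 0 →
        N * suFormSmall p n + suFormSmall p n * Nᴴ = 0 → N.trace = 0 →
          crAlpha p n b (M * N - N * M) =
            crAlpha p n b M * crAlpha p n b N - crAlpha p n b N * crAlpha p n b M) ∧
    (∀ M : Matrix (Unit ⊕ Fin n) (Unit ⊕ Fin n) ℂ,
        M * suFormSmall p n + suFormSmall p n * Mᴴ = 0 → M.trace = 0 →
          crAlpha p n b M = 0 → M = 0) := by
  have hWV := crW_mul_crV n hb
  refine ⟨crAlpha_add p n b, crAlpha_real_smul p n b, fun M hM htr => ?_,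
    fun M N hM _ hN _ => ?_, fun M hM _ h0 => ?_⟩
  · rw [crAlpha_eq_crV_mul_mul_crW hb hM, trace_mul_mul_of_mul_eq_one hWV, htr,
      mul_mul_mul_add_mul_conjTranspose (crW_mul_suFormBig p n b)
        (suFormBig_mul_crW_conjTranspose p n b), hM]
    simp
  · rw [crAlpha_eq_crV_mul_mul_crW hb (commutator_mul_add_mul_conjTranspose hM hN),
      crAlpha_eq_crV_mul_mul_crW hb hM, crAlpha_eq_crV_mul_mul_crW hb hN,
      mul_commutator_mul_of_mul_eq_one hWV]
  · refine mul_mul_injective_of_mul_eq_one hWV ?_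
    simpa [crAlpha_eq_crV_mul_mul_crW hb hM] using h0

/-- For `n ≥ 1`, `p + q = n` and a nonzero `b ∈ ℂ`, the map
`α` above is an injective Lie algebra homomorphism from `su(p+1,q)` into
`su(p+1,q+1)`. -/
theorem crAlpha_injective_lieHom (p q n : ℕ) (hpq : p + q = n) (hn : 1 ≤ n)
    (b : ℂ) (hb : b ≠ 0) :
    (∀ M N : Matrix (Unit ⊕ Fin n) (Unit ⊕ Fin n) ℂ,
        crAlpha p n b (M + N) = crAlpha p n b M + crAlpha p n b N) ∧
    (∀ (c : ℝ) (M : Matrix (Unit ⊕ Fin n) (Unit ⊕ Fin n) ℂ),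
        crAlpha p n b (c • M) = c • crAlpha p n b M) ∧
    (∀ M : Matrix (Unit ⊕ Fin n) (Unit ⊕ Fin n) ℂ,
        M * suFormSmall p n + suFormSmall p n * Mᴴ = 0 → M.trace = 0 →
          crAlpha p n b M * suFormBig p n + suFormBig p n * (crAlpha p n b M)ᴴ = 0 ∧
          (crAlpha p n b M).trace = 0) ∧
    (∀ M N : Matrix (Unit ⊕ Fin n) (Unit ⊕ Fin n) ℂ,
        M * suFormSmall p n + suFormSmall p n * Mᴴ = 0 → M.trace = 0 →
        N * suFormSmall p n + suFormSmall p n * Nᴴ = 0 → N.trace = 0 →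
          crAlpha p n b (M * N - N * M) =
            crAlpha p n b M * crAlpha p n b N - crAlpha p n b N * crAlpha p n b M) ∧
    (∀ M : Matrix (Unit ⊕ Fin n) (Unit ⊕ Fin n) ℂ,
        M * suFormSmall p n + suFormSmall p n * Mᴴ = 0 → M.trace = 0 →
          crAlpha p n b M = 0 → M = 0) :=
  crAlpha_injective_lieHom_general p n b hb
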